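/- For the abstract lock object l and threads t ≠ t', the Hoare triple {¬⟨l.release_u⟩_{t'} ∧ [x = v]_t} l.Release(u)_t {⟨l.release_u⟩[x = v]_{t'}} is valid: if thread t' cannot possibly observe any l.release_u operation and thread t definitely observes value v for client variable x, then after thread t releases the lock with version u, the conditional observation holds for t': any observable l.release_u it synchronises with will establish the definite observation [x = v]_{t'}. -/
import Mathlib


/-!  Core formalisation of the RC11 RAR operational memory semantics of
Dalvandi & Dongol, "Verifying C11-Style Weak Memory Libraries": client
component states, the abstract lock object and its Acquire/Release
transitions, and the observability assertions. -/

abbrev Tid := ℕ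
abbrev Var := String
abbrev Val := ℕ

/-- A client write action: variable, value written, and whether releasing. -/
structure WrAct where
  var : Var
  val : Val
  rel : Bool
deriving DecidableEq

/-- A timestamped client write. -/
abbrev Wr := WrAct × ℚ

/-- The timestamp of a client write. -/
def tst (w : Wr) : ℚ := w.2

/-- A client view: one timestamped write per variable. -/
abbrev View := Var → Wr

/-- The pointwise-later merge `⊗` of two client views. -/
def merge (V₁ V₂ : View) : View :=
  fun x => if tst (V₂ x) ≤ tst (V₁ x) then V₁ x else V₂ x

/-- Updating a view at one variable. -/
def vupd (V : View) (x : Var) (w : Wr) : View := Function.update V x w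

/-- Abstract lock actions: `l.init_0`, `l.acquire_n(t)` and `l.release_n`. -/
inductive LockAct : Type
  | init : LockAct
  | acquire (n : ℕ) (t : Tid) : LockAct
  | release (n : ℕ) : LockAct
deriving DecidableEq

/-- A timestamped abstract lock operation. -/
abbrev LockOp := LockAct × ℚ

/-- The library state of the abstract lock object:  timestamped operations,
per-thread viewfronts on the lock, modification views (library part `mviewL`
and client part `mviewC`), and the covered operations. -/
structure LockState where
  ops : Set LockOp
  tview : Tid → LockOp
  mviewL : LockOp → LockOp
  mviewC : LockOp → View
  cvd : Set LockOp

/-- The client component state: timestamped writes, per-thread viewfronts,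
modification views (client part `mview` and library part `mviewO`), and
covered writes. -/
structure CState where
  ops : Set Wr
  tview : Tid → View
  mview : Wr → View
  mviewO : Wr → LockOp
  cvd : Set Wr

/-- The client writes on `x` observable to thread `t`. -/
def CState.Obs (γ : CState) (t : Tid) (x : Var) : Set Wr :=
  {w | w ∈ γ.ops ∧ w.1.var = x ∧ tst (γ.tview t x) ≤ tst w}

/-- `w` is the last (maximally timestamped) write to `x` in the client state. -/
def isLastWr (γ : CState) (x : Var) (w : Wr) : Prop :=
  w ∈ γ.ops ∧ w.1.var = x ∧ ∀ w' ∈ γ.ops, w'.1.var = x → tst w' ≤ tst w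

/-- Definite client observation `[x = u]_t`. -/
def dObsC (γ : CState) (t : Tid) (x : Var) (u : Val) : Prop :=
  isLastWr γ x (γ.tview t x) ∧ (γ.tview t x).1.val = u

/-- Possible observation of an abstract lock operation `⟨m⟩_t`. -/
def pObsL (β : LockState) (t : Tid) (m : LockAct) : Prop :=
  ∃ q : ℚ, (m, q) ∈ β.ops ∧ (β.tview t).2 ≤ q

/-- Definite observation of an abstract lock operation `[m]_t`: thread `t`'s
viewfront on the lock is the maximally timestamped operation and that
operation is `m`. -/
def dObsL (β : LockState) (t : Tid) (m : LockAct) : Prop :=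
  β.tview t ∈ β.ops ∧ (∀ p ∈ β.ops, p.2 ≤ (β.tview t).2) ∧ (β.tview t).1 = m

/-- Hidden-value assertion `H[m]`: some operation `(m, q)` exists in `ops`,
and every such operation is covered. -/
def hiddenL (β : LockState) (m : LockAct) : Prop :=
  (∃ q : ℚ, (m, q) ∈ β.ops) ∧ ∀ q : ℚ, (m, q) ∈ β.ops → (m, q) ∈ β.cvd

/-- Conditional observation across components `⟨m⟩[x = n]_t`: for every
operation `(m, q)` in the library with `q` at or after `t`'s viewfront on the
lock, the client part of its modification view makes `x` definitely `n`.
(Abstract lock operations are synchronising by default.) -/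
def cObsL (β : LockState) (γ : CState) (m : LockAct) (t : Tid) (x : Var) (n : Val) : Prop :=
  ∀ q : ℚ, (m, q) ∈ β.ops → (β.tview t).2 ≤ q →
    isLastWr γ x (β.mviewC (m, q) x) ∧ (β.mviewC (m, q) x).1.val = n

/-- The later (in timestamp order) of two lock operations. -/
def laterOp (p p' : LockOp) : LockOp := if p'.2 ≤ p.2 then p else p'

/-- Abstract lock Acquire by thread `t` obtaining version `v`: the maximally
timestamped operation `(w, q)` on the lock must be `l.init_0` or
`l.release_{v-1}`; the new operation `(l.acquire_v(t), q')` with `q' > q` is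
added, `(w, q)` becomes covered, and `t`'s library and client views
release-acquire synchronise with the modification view of `(w, q)`.  The new
operation's modification view records `t`'s combined views. -/
def lockAcquire (t : Tid) (v : ℕ) (β : LockState) (γ : CState)
    (β' : LockState) (γ' : CState) : Prop :=
  ∃ (w : LockAct) (q q' : ℚ),
    (w, q) ∈ β.ops ∧
    ((w = LockAct.init ∧ v = 1) ∨ (∃ u : ℕ, v = u + 1 ∧ w = LockAct.release u)) ∧
    (∀ p ∈ β.ops, p.2 ≤ q) ∧ q < q' ∧
    (let b : LockOp := (LockAct.acquire v t, q')
     let tv' : LockOp := laterOp b (β.mviewL (w, q))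
     let ctv' : View := merge (γ.tview t) (β.mviewC (w, q))
     β'.ops = insert b β.ops ∧
     β'.cvd = insert (w, q) β.cvd ∧
     β'.tview = Function.update β.tview t tv' ∧
     β'.mviewL = Function.update β.mviewL b tv' ∧
     β'.mviewC = Function.update β.mviewC b ctv' ∧
     γ'.ops = γ.ops ∧ γ'.cvd = γ.cvd ∧ γ'.mview = γ.mview ∧ γ'.mviewO = γ.mviewO ∧
     γ'.tview = Function.update γ.tview t ctv')

/-- Abstract lock Release by thread `t` with version `v`: the maximally
timestamped operation on the lock must be `l.acquire_{v-1}(t)`; the new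
operation `(l.release_v, q')` is added with a maximal fresh timestamp, and its
modification view records `t`'s combined client and library views.  The client
state is unchanged. -/
def lockRelease (t : Tid) (v : ℕ) (β : LockState) (γ : CState)
    (β' : LockState) (γ' : CState) : Prop :=
  ∃ (q q' : ℚ) (u : ℕ),
    v = u + 1 ∧ (LockAct.acquire u t, q) ∈ β.ops ∧
    (∀ p ∈ β.ops, p.2 ≤ q) ∧ q < q' ∧
    (let a : LockOp := (LockAct.release v, q')
     β'.ops = insert a β.ops ∧ β'.cvd = β.cvd ∧
     β'.tview = Function.update β.tview t a ∧
     β'.mviewL = Function.update β.mviewL a a ∧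
     β'.mviewC = Function.update β.mviewC a (γ.tview t) ∧
     γ' = γ)

/-- For threads `t ≠ t'`, the Hoare triple
`{¬⟨l.release_u⟩_{t'} ∧ [x = v]_t} l.Release(u)_t {⟨l.release_u⟩[x = v]_{t'}}`
is valid: if thread `t'` cannot possibly observe any `l.release_u` operation
and thread `t` definitely observes value `v` for client variable `x`, then
after thread `t` releases the lock with version `u`, the conditional
observation `⟨l.release_u⟩[x = v]_{t'}` holds. -/
theorem abslock_release_cObs_intro
    (t t' : Tid) (u : ℕ) (x : Var) (v : Val) (β β' : LockState) (γ γ' : CState)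
    (hne : t ≠ t')
    (hp : ¬ pObsL β t' (LockAct.release u))
    (hd : dObsC γ t x v)
    (hstep : lockRelease t u β γ β' γ') :
    cObsL β' γ' (LockAct.release u) t' x v := by
  obtain ⟨q, q', u', hv, hacq, hmax, hlt, hops, hcvd, htv, hmL, hmC, hγ⟩ := hstep
  intro q₀ hmem htvle
  have htv' : β'.tview t' = β.tview t' := by
    rw [htv, Function.update_of_ne (Ne.symm hne)]
  rw [htv'] at htvle
  rw [hops] at hmem
  rcases hmem with hmem | hmem
  · -- the new operation: q₀ = q'
    have hq : q₀ = q' := by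
      have := congrArg Prod.snd hmem
      simpa using this
    subst hq
    have : (LockAct.release u, q₀) = ((LockAct.release u, q₀) : LockOp) := rfl
    rw [hmC, hmem, Function.update_self, hγ]
    exact ⟨hd.1, hd.2⟩
  · exact absurd ⟨q₀, hmem, htvle⟩ hp
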